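/- arXiv:2509.25006 — 2 statements merged into one kernel-verified Lean document; each statement's English description precedes it below -/
import Mathlib

section
/- Let C_2 be a cyclic group of order two acting trivially on the field F_2 with two elements. Then for every natural number n, the group homology H_n(C_2, F_2) is a one-dimensional vector space over F_2. -/
open CategoryTheory

noncomputable section

/-- `C₂`, a cyclic group of order two. -/
abbrev C2 : Type := Multiplicative (ZMod 2)

/-- The group algebra `𝔽₂[C₂]`. -/
abbrev F2C2 : Type := MonoidAlgebra (ZMod 2) C2

/-- The augmentation `𝔽₂[C₂] → 𝔽₂`, corresponding to the trivial action of `C₂` on `𝔽₂`. -/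
def augmentation : F2C2 →ₐ[ZMod 2] ZMod 2 :=
  MonoidAlgebra.lift (ZMod 2) (ZMod 2) C2 1

/-- The field `𝔽₂` with two elements, regarded as a trivial `C₂`-module, i.e. as a module
over the group algebra `𝔽₂[C₂]` via the augmentation. -/
def TrivialF2 : Type := ZMod 2

instance : AddCommGroup TrivialF2 := inferInstanceAs (AddCommGroup (ZMod 2))

instance : Module (ZMod 2) TrivialF2 := inferInstanceAs (Module (ZMod 2) (ZMod 2))

instance : Module F2C2 TrivialF2 := Module.compHom TrivialF2 augmentation.toRingHom

/-- Group homology `H_n(C₂, 𝔽₂)` of the cyclic group of order two with coefficients in the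
trivial module `𝔽₂`, defined as `Tor_n` over the group algebra `𝔽₂[C₂]`. -/
def groupHomologyC2F2 (n : ℕ) : ModuleCat F2C2 :=
  ((Tor (ModuleCat F2C2) n).obj (ModuleCat.of F2C2 TrivialF2)).obj
    (ModuleCat.of F2C2 TrivialF2)

/-!
In characteristic two, `t = g + 1 ∈ 𝔽₂[C₂]` is at the same time `g - 1` and the norm element,
and `x * t = ε(x) • t` for the augmentation `ε`. Hence the kernel of multiplication by `t` is its
image, and so is the kernel of `ε`: the periodic complex `⋯ → 𝔽₂[C₂] → 𝔽₂[C₂] → 𝔽₂[C₂]`, all of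
whose differentials are multiplication by `t`, is a free resolution of `𝔽₂`. Since `t` acts by
zero on `𝔽₂`, tensoring it with `𝔽₂` kills every differential, so each `Tor_n` is
`𝔽₂ ⊗ 𝔽₂[C₂] ≅ 𝔽₂`.
-/

universe u

section PeriodicResolution

variable {R : Type u} [CommRing R]

def periodicComplex (t : R) (ht : t * t = 0) : ChainComplex (ModuleCat.{u} R) ℕ :=
  ChainComplex.of (fun _ => ModuleCat.of R R) (fun _ => ModuleCat.ofHom (LinearMap.mulRight R t))
    fun _ => by ext; simp [ht]

lemma periodicComplex_d_succ (t : R) (ht : t * t = 0) (n : ℕ) :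
    (periodicComplex t ht).d (n + 1) n = ModuleCat.ofHom (LinearMap.mulRight R t) := by
  simp [periodicComplex]

lemma periodicComplex_exactAt_succ {t : R} (ht : t * t = 0)
    (hexact : Function.Exact (· * t) (· * t)) (n : ℕ) :
    (periodicComplex t ht).ExactAt (n + 1) := by
  rw [HomologicalComplex.exactAt_iff' _ (n + 2) (n + 1) n (by simp) (by simp),
    ShortComplex.moduleCat_exact_iff]
  intro x hx
  simp only [HomologicalComplex.sc', HomologicalComplex.shortComplexFunctor',
    periodicComplex_d_succ] at hx ⊢
  exact (hexact x).1 hx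

lemma apply_eq_zero_of_exact_mul_right {M : Type*} [Zero M] {t : R} {f : R → M}
    (h : Function.Exact (· * t) f) : f t = 0 := by
  simpa using h.apply_apply_eq_zero 1

variable {N : ModuleCat.{u} R}

def periodicComplexπ {t : R} (ht : t * t = 0) (ε : R →ₗ[R] N) (hε : ε t = 0) :
    periodicComplex t ht ⟶ (ChainComplex.single₀ (ModuleCat R)).obj N :=
  (ChainComplex.toSingle₀Equiv _ N).symm ⟨ModuleCat.ofHom ε, by
    ext
    change ε (1 * t) = 0
    rw [one_mul, hε]⟩

lemma quasiIso_periodicComplexπ {t : R} (hexact : Function.Exact (· * t) (· * t))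
    {ε : R →ₗ[R] N} (hε : Function.Exact (· * t) ε) (hsurj : Function.Surjective ε) :
    QuasiIso (periodicComplexπ (apply_eq_zero_of_exact_mul_right (f := (· * t)) hexact) ε
      (apply_eq_zero_of_exact_mul_right hε)) where
  quasiIsoAt
  | 0 => by
    rw [ChainComplex.quasiIsoAt₀_iff, ShortComplex.quasiIso_iff_of_zeros' _ rfl rfl rfl]
    constructor
    · rw [ShortComplex.moduleCat_exact_iff]
      exact fun x hx => (hε x).1 hx
    · rw [ModuleCat.epi_iff_surjective]
      exact hsurj
  | n + 1 => by
    rw [quasiIsoAt_iff_exactAt' (hL := ChainComplex.exactAt_succ_single_obj ..)]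
    exact periodicComplex_exactAt_succ _ hexact n

def periodicResolution (t : R) (hexact : Function.Exact (· * t) (· * t))
    (ε : R →ₗ[R] N) (hε : Function.Exact (· * t) ε) (hsurj : Function.Surjective ε) :
    ProjectiveResolution N where
  complex := periodicComplex t (apply_eq_zero_of_exact_mul_right (f := (· * t)) hexact)
  projective _ := inferInstanceAs (Projective (ModuleCat.of R R))
  π := periodicComplexπ _ ε (apply_eq_zero_of_exact_mul_right hε)
  quasiIso := quasiIso_periodicComplexπ hexact hε hsurj

end PeriodicResolution

def HomologicalComplex.homologyIsoXOfDEqZero {ι C : Type*} [Category C]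
    [Limits.HasZeroMorphisms C] [CategoryWithHomology C] {c : ComplexShape ι}
    (K : HomologicalComplex C c) (hK : ∀ i j, K.d i j = 0) (j : ι) : K.homology j ≅ K.X j :=
  (K.isoHomologyπ _ j rfl (hK _ _)).symm ≪≫ K.iCyclesIso j _ rfl (hK _ _)

section Tor

open MonoidalCategory

variable {R : Type u} [CommRing R] {M : ModuleCat.{u} R} {t : R}

lemma tensoringLeft_map_mulRight_eq_zero (hM : Module.IsTorsionBy R M t) :
    ((tensoringLeft (ModuleCat R)).obj M).map (ModuleCat.ofHom (LinearMap.mulRight R t)) = 0 :=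
  ModuleCat.hom_ext <| TensorProduct.ext' fun m x => by
    change m ⊗ₜ[R] (x * t) = 0
    rw [mul_comm, ← smul_eq_mul, ← TensorProduct.smul_tmul, hM, TensorProduct.zero_tmul]

lemma tensoringLeft_periodicComplex_d_eq_zero (ht : t * t = 0) (hM : Module.IsTorsionBy R M t)
    (i j : ℕ) :
    ((((tensoringLeft (ModuleCat R)).obj M).mapHomologicalComplex _).obj
      (periodicComplex t ht)).d i j = 0 := by
  by_cases hij : j + 1 = i
  · subst hij
    simp only [Functor.mapHomologicalComplex_obj_d, periodicComplex_d_succ]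
    exact tensoringLeft_map_mulRight_eq_zero hM
  · exact HomologicalComplex.shape _ _ _ hij

def torIsoOfIsTorsionBy {N : ModuleCat.{u} R} (hexact : Function.Exact (· * t) (· * t))
    {ε : R →ₗ[R] N} (hε : Function.Exact (· * t) ε) (hsurj : Function.Surjective ε)
    (hM : Module.IsTorsionBy R M t) (n : ℕ) :
    ((Tor (ModuleCat.{u} R) n).obj M).obj N ≅ M :=
  (periodicResolution t hexact ε hε hsurj).isoLeftDerivedObj _ n ≪≫
    HomologicalComplex.homologyIsoXOfDEqZero _ (tensoringLeft_periodicComplex_d_eq_zero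
      (apply_eq_zero_of_exact_mul_right (f := (· * t)) hexact) hM) n ≪≫
    (TensorProduct.rid R M).toModuleIso

end Tor

namespace C2

def gen : C2 := Multiplicative.ofAdd 1

lemma eq_one_or_eq_gen (c : C2) : c = 1 ∨ c = gen := by
  revert c; decide

lemma gen_mul_gen : gen * gen = 1 := by decide

instance : CharP F2C2 2 := charP_of_injective_algebraMap (algebraMap (ZMod 2) F2C2).injective 2

def t : F2C2 := MonoidAlgebra.of (ZMod 2) C2 gen + 1

lemma augmentation_single (c : C2) (a : ZMod 2) :
    augmentation (MonoidAlgebra.single c a) = a := by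
  simp [augmentation]

lemma augmentation_t : augmentation t = 0 := by
  rw [t, map_add, MonoidAlgebra.of_apply, augmentation_single, map_one, CharTwo.add_self_eq_zero]

lemma t_mul_t : t * t = 0 := by
  rw [t, CharTwo.add_mul_self, ← map_mul, gen_mul_gen, map_one, one_mul,
    CharTwo.add_self_eq_zero]

lemma t_ne_zero : t ≠ 0 := by
  rw [Ne, t, CharTwo.add_eq_zero, ← map_one (MonoidAlgebra.of (ZMod 2) C2),
    MonoidAlgebra.of_injective.eq_iff]
  decide

lemma eq_coeff_gen_smul_t_add (x : F2C2) : x = x.coeff gen • t + augmentation x • 1 := by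
  induction x using MonoidAlgebra.induction_linear with
  | zero => simp
  | add x y hx hy =>
    conv_lhs => rw [hx, hy]
    simp only [MonoidAlgebra.coeff_add, Finsupp.add_apply, map_add, add_smul]
    abel
  | single c a =>
    rcases eq_one_or_eq_gen c with rfl | rfl
    · simp [MonoidAlgebra.one_def, augmentation_single, gen]
    · simp [t, augmentation_single, add_assoc, CharTwo.add_self_eq_zero]

lemma mul_t_eq_augmentation_smul (x : F2C2) : x * t = augmentation x • t := by
  conv_lhs => rw [eq_coeff_gen_smul_t_add x]
  rw [add_mul, smul_mul_assoc, t_mul_t, smul_zero, zero_add, smul_mul_assoc, one_mul]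

lemma exact_mul_t_augmentation : Function.Exact (· * t) augmentation := by
  intro x
  constructor
  · intro hx
    refine ⟨x.coeff gen • 1, ?_⟩
    dsimp only
    rw [smul_mul_assoc, one_mul]
    conv_rhs => rw [eq_coeff_gen_smul_t_add x, hx, zero_smul, add_zero]
  · rintro ⟨y, rfl⟩
    rw [map_mul, augmentation_t, mul_zero]

lemma exact_mul_t_mul_t : Function.Exact (· * t) (· * t) := by
  intro x
  dsimp only
  rw [mul_t_eq_augmentation_smul, smul_eq_zero, or_iff_left t_ne_zero]
  exact exact_mul_t_augmentation x

def augmentationHom : F2C2 →ₗ[F2C2] TrivialF2 where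
  toFun x := augmentation x
  map_add' := map_add augmentation
  map_smul' := map_mul augmentation

lemma isTorsionBy_t : Module.IsTorsionBy F2C2 TrivialF2 t := fun a =>
  show augmentation t • a = 0 by rw [augmentation_t, zero_smul]

def groupHomologyIso (n : ℕ) : groupHomologyC2F2 n ≅ ModuleCat.of F2C2 TrivialF2 :=
  torIsoOfIsTorsionBy exact_mul_t_mul_t (ε := augmentationHom) exact_mul_t_augmentation
    (fun a => ⟨MonoidAlgebra.single 1 a, augmentation_single 1 a⟩) isTorsionBy_t n

end C2

open scoped ModuleCat in
/-- For every natural number `n`, the group homology `H_n(C₂, 𝔽₂)` of the cyclic group of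
order two with coefficients in the field `𝔽₂` with two elements, regarded as a trivial
`C₂`-module, is a one-dimensional `𝔽₂`-vector space. -/
theorem groupHomology_C2_F2_one_dimensional (n : ℕ) :
    Module.finrank (ZMod 2) (groupHomologyC2F2 n) = 1 := by
  rw [((C2.groupHomologyIso n).toLinearEquiv.restrictScalars (ZMod 2)).finrank_eq]
  -- the `ZMod 2`-structure restricted along `ZMod 2 → 𝔽₂[C₂]` is definitionally the standard one
  exact Module.finrank_self (ZMod 2)
end
end

section
/- Let C be the chain complex of abelian groups in which, for n ≥ 1, C_n is the free abelian group on the set of pairs (i, k) of integers with i ≥ 1, k ≥ 0, and i + 2k = n, C_0 = 0, and the differential d : C_n → C_{n-1} sends the generator (i, k) to 2·(i−1, k) if i is even and to 0 if i is odd. Then for every i ≥ 0 the homology H_{2i+1}(C) is isomorphic to (ℤ/2)^{i+1}, and for every i ≥ 1 the homology H_{2i}(C) is the zero group. -/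
/-!
Odd generators are cycles, and each even generator `(a, k)` is sent to twice the generator
`(a - 1, k)`, a bijection between the generators in degrees `2i + 2` and `2i + 1`. So
`d : C_{2i+1} → C_{2i}` vanishes and `d : C_{2i+2} → C_{2i+1}` is `2` times an isomorphism:
`H_{2i+1} = C_{2i+1} / 2` is `ℤ/2` on the `i + 1` generators `(2j + 1, i - j)`, and
`H_{2i+2} = 0` because a free abelian group has no `2`-torsion.
-/

open CategoryTheory

noncomputable section

/-- The set of generators in degree `n`: pairs `(i, k)` with `i ≥ 1`, `k ≥ 0` and
`i + 2k = n`. -/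
abbrev S (n : ℕ) : Type := {p : ℕ × ℕ // 1 ≤ p.1 ∧ p.1 + 2 * p.2 = n}

/-- The differential, sending the generator `(i, k)` to `2·(i−1, k)` if `i` is even and
to `0` if `i` is odd. -/
def dLin (n : ℕ) : (S (n + 1) →₀ ℤ) →ₗ[ℤ] (S n →₀ ℤ) :=
  Finsupp.lsum ℤ fun p =>
    if h : p.1.1 % 2 = 0 then
      (2 : ℤ) • Finsupp.lsingle (⟨(p.1.1 - 1, p.1.2), by obtain ⟨h1, h2⟩ := p.2; omega⟩ : S n)
    else 0

lemma dLin_single (n : ℕ) (p : S (n + 1)) (b : ℤ) :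
    dLin n (Finsupp.single p b) =
      if h : p.1.1 % 2 = 0 then
        (2 : ℤ) • Finsupp.single
          (⟨(p.1.1 - 1, p.1.2), by obtain ⟨_, _⟩ := p.2; omega⟩ : S n) b
      else 0 := by
  simp only [dLin, Finsupp.lsum_single]
  split_ifs with h
  · simp
  · simp

lemma dLin_dLin (n : ℕ) (v : S (n + 2) →₀ ℤ) : dLin n (dLin (n + 1) v) = 0 := by
  induction v using Finsupp.induction_linear with
  | zero => simp
  | add f g hf hg => simp [hf, hg]
  | single p b =>
    rw [dLin_single]
    split_ifs with h
    · rw [map_smul, dLin_single]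
      split_ifs with h'
      · exfalso
        obtain ⟨h1, h2⟩ := p.2
        dsimp only at h'
        omega
      · simp
    · simp

/-- The chain complex of abelian groups with `C_n` free on the pairs `(i, k)` with `i ≥ 1`,
`k ≥ 0`, `i + 2k = n` (so `C_0 = 0`), and differential `(i, k) ↦ 2·(i−1, k)` for `i` even,
`(i, k) ↦ 0` for `i` odd. -/
def AHComplex : ChainComplex (ModuleCat ℤ) ℕ :=
  ChainComplex.of (fun n => ModuleCat.of ℤ (S n →₀ ℤ))
    (fun n => ModuleCat.ofHom (dLin n))
    (fun n => by
      ext : 1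
      exact LinearMap.ext fun v => dLin_dLin n v)

namespace Finsupp

variable (ι : Type*) (n : ℕ)

theorem ker_mapRange_intCast :
    LinearMap.ker (mapRange.linearMap (Int.castAddHom (ZMod n)).toIntLinearMap :
        (ι →₀ ℤ) →ₗ[ℤ] ι →₀ ZMod n) =
      LinearMap.range ((n : ℤ) • LinearMap.id : (ι →₀ ℤ) →ₗ[ℤ] ι →₀ ℤ) := by
  ext x
  simp only [LinearMap.mem_ker, LinearMap.mem_range]
  constructor
  · intro hx
    have hdvd (s : ι) : (n : ℤ) ∣ x s :=
      (ZMod.intCast_zmod_eq_zero_iff_dvd _ n).1 (by simpa using DFunLike.congr_fun hx s)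
    refine ⟨mapRange (· / (n : ℤ)) (Int.zero_ediv _) x, ext fun s => ?_⟩
    simp [Int.mul_ediv_cancel' (hdvd s)]
  · rintro ⟨y, rfl⟩
    ext s
    simp

def quotRangeSMulEquivZMod :
    ((ι →₀ ℤ) ⧸ LinearMap.range ((n : ℤ) • LinearMap.id : (ι →₀ ℤ) →ₗ[ℤ] ι →₀ ℤ)) ≃ₗ[ℤ]
      (ι →₀ ZMod n) :=
  (Submodule.quotEquivOfEq _ _ (ker_mapRange_intCast ι n).symm).trans
    (LinearMap.quotKerEquivOfSurjective _
      (mapRange_surjective _ (map_zero _) ZMod.intCast_surjective))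

end Finsupp

theorem LinearMap.range_smul_linearEquiv {R M N : Type*} [CommSemiring R] [AddCommMonoid M]
    [AddCommMonoid N] [Module R M] [Module R N] (c : R) (e : M ≃ₗ[R] N) :
    LinearMap.range (c • (e : M →ₗ[R] N)) = LinearMap.range (c • LinearMap.id) := by
  rw [← LinearMap.id_comp (e : M →ₗ[R] N), ← LinearMap.smul_comp,
    LinearMap.range_comp_of_range_eq_top _ e.range]

universe v

def CategoryTheory.ShortComplex.moduleCatHomologyIsoOfGEqZero {R : Type*} [Ring R]
    (S : ShortComplex (ModuleCat.{v} R)) (hg : S.g = 0) :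
    S.homology ≅ ModuleCat.of R (S.X₂ ⧸ LinearMap.range S.f.hom) :=
  have := S.isIso_homologyι hg
  asIso S.homologyι ≪≫ S.moduleCatOpcyclesIso

def oddGenEquiv (i : ℕ) : Fin (i + 1) ≃ S (2 * i + 1) where
  toFun j := ⟨(2 * j + 1, i - j), by omega⟩
  invFun p := ⟨(p.1.1 - 1) / 2, by obtain ⟨_, _⟩ := p.2; omega⟩
  left_inv j := by ext; simp only; omega
  right_inv p := by
    obtain ⟨⟨a, k⟩, _, _⟩ := p
    ext <;> simp only <;> omega

def predGenEquiv (i : ℕ) : S (2 * i + 2) ≃ S (2 * i + 1) where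
  toFun p := ⟨(p.1.1 - 1, p.1.2), by obtain ⟨_, _⟩ := p.2; omega⟩
  invFun p := ⟨(p.1.1 + 1, p.1.2), by obtain ⟨_, _⟩ := p.2; omega⟩
  left_inv p := by
    obtain ⟨⟨a, k⟩, _, _⟩ := p
    ext <;> simp only; omega
  right_inv p := by ext <;> simp

lemma dLin_two_mul (i : ℕ) : dLin (2 * i) = 0 := by
  refine Finsupp.lhom_ext fun p b => ?_
  obtain ⟨_, _⟩ := p.2
  rw [dLin_single, dif_neg (by omega)]
  rfl

lemma dLin_two_mul_add_one (i : ℕ) :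
    dLin (2 * i + 1) = (2 : ℤ) • ((Finsupp.domLCongr (predGenEquiv i) :
      (S (2 * i + 2) →₀ ℤ) ≃ₗ[ℤ] S (2 * i + 1) →₀ ℤ) : _ →ₗ[ℤ] _) := by
  refine Finsupp.lhom_ext fun p b => ?_
  obtain ⟨_, _⟩ := p.2
  rw [dLin_single, dif_pos (by omega)]
  simp only [LinearMap.smul_apply, LinearEquiv.coe_coe, Finsupp.domLCongr_apply,
    Finsupp.domCongr_apply, Finsupp.equivMapDomain_single]
  rfl

lemma dLin_two_mul_add_one_injective (i : ℕ) : Function.Injective (dLin (2 * i + 1)) := by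
  rw [dLin_two_mul_add_one, LinearMap.coe_smul]
  exact (smul_right_injective (S (2 * i + 1) →₀ ℤ) two_ne_zero).comp
    (Finsupp.domLCongr (R := ℤ) (M := ℤ) (predGenEquiv i)).injective

namespace AHComplex

lemma hom_d_succ (n : ℕ) : (AHComplex.d (n + 1) n).hom = dLin n :=
  congrArg ModuleCat.Hom.hom <|
    ChainComplex.of_d (fun n => ModuleCat.of ℤ (S n →₀ ℤ)) (fun n => ModuleCat.ofHom (dLin n)) n

def homologyOddEquiv (i : ℕ) : AHComplex.homology (2 * i + 1) ≃ₗ[ℤ] (Fin (i + 1) → ZMod 2) :=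
  let T := AHComplex.sc' (2 * i + 2) (2 * i + 1) (2 * i)
  have hg : T.g = 0 := ModuleCat.hom_ext ((hom_d_succ _).trans (dLin_two_mul i))
  have hf : LinearMap.range T.f.hom = LinearMap.range (((2 : ℕ) : ℤ) • LinearMap.id) := by
    rw [show T.f.hom = dLin (2 * i + 1) from hom_d_succ _, dLin_two_mul_add_one]
    exact LinearMap.range_smul_linearEquiv _ _
  (AHComplex.homologyIsoSc' _ _ _ (ChainComplex.prev ℕ _) (ChainComplex.next_nat_succ _) ≪≫
      T.moduleCatHomologyIsoOfGEqZero hg).toLinearEquiv ≪≫ₗ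
    Submodule.quotEquivOfEq _ _ hf ≪≫ₗ Finsupp.quotRangeSMulEquivZMod _ 2 ≪≫ₗ
    Finsupp.domLCongr (oddGenEquiv i).symm ≪≫ₗ Finsupp.linearEquivFunOnFinite ℤ (ZMod 2) _

lemma subsingleton_homology_even (i : ℕ) : Subsingleton (AHComplex.homology (2 * (i + 1))) := by
  let T := AHComplex.sc' (2 * (i + 1) + 1) (2 * (i + 1)) (2 * i + 1)
  have hf : T.f = 0 := ModuleCat.hom_ext ((hom_d_succ _).trans (dLin_two_mul (i + 1)))
  have hg : Mono T.g := (ModuleCat.mono_iff_injective _).2 <| by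
    have hinj := dLin_two_mul_add_one_injective i
    rw [← hom_d_succ] at hinj
    exact hinj
  have hexact : AHComplex.ExactAt (2 * (i + 1)) :=
    (AHComplex.exactAt_iff' _ _ _ (ChainComplex.prev ℕ _) (ChainComplex.next_nat_succ _)).2
      ((T.exact_iff_mono hf).2 hg)
  exact ModuleCat.subsingleton_of_isZero ((AHComplex.exactAt_iff_isZero_homology _).1 hexact)

end AHComplex

/-- For every `i ≥ 0`, the homology `H_{2i+1}` of the complex is isomorphic to
`(ℤ/2)^{i+1}`, and for every `i ≥ 1`, the homology `H_{2i}` is the zero group. -/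
theorem AHComplex_homology :
    (∀ i : ℕ, Nonempty ((AHComplex.homology (2 * i + 1)) ≃+ (Fin (i + 1) → ZMod 2))) ∧
      (∀ i : ℕ, 1 ≤ i → Subsingleton (AHComplex.homology (2 * i))) := by
  refine ⟨fun i => ⟨(AHComplex.homologyOddEquiv i).toAddEquiv⟩, fun i hi => ?_⟩
  obtain ⟨j, rfl⟩ := Nat.exists_eq_add_of_le' hi
  exact AHComplex.subsingleton_homology_even j

end
end
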